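/- Let p be a prime and let a, b, c, s be natural numbers with a = c · p^s and b ≤ a. If p^s divides b, then C(a,b) ≡ C(c, b / p^s) (mod p). -/

import Mathlib

theorem stmt4_general (p a b c s : ℕ) (hp : p.Prime) (ha : a = c * p ^ s)
    (h : p ^ s ∣ b) :
    Nat.choose a b ≡ Nat.choose c (b / p ^ s) [MOD p] := by
  have : Fact p.Prime := ⟨hp⟩
  obtain ⟨d, rfl⟩ := h
  rw [ha, mul_comm c, Nat.mul_div_cancel_left d (pow_pos hp.pos s)]
  exact Choose.choose_pow_mul_pow_mul_modEq_choose_nat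

/-- If `p` is prime, `a = c * p ^ s`, `b ≤ a` and `p ^ s ∣ b`, then
`C(a, b) ≡ C(c, b / p ^ s) (mod p)`. -/
theorem stmt4 (p a b c s : ℕ) (hp : p.Prime) (ha : a = c * p ^ s) (hb : b ≤ a)
    (h : p ^ s ∣ b) :
    Nat.choose a b ≡ Nat.choose c (b / p ^ s) [MOD p] :=
  stmt4_general p a b c s hp ha h
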